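/- For any a > 0 and q₀ > 1, q₀ / tanh(a q₀) > 1 + (1 + 2a)e^{-2a} - 2a e^{-2a} q₀². -/

import Mathlib

/-! Writing `t = e^{-2aq₀} ∈ (0, 1)`, one has `1 / tanh (a q₀) = (1 + t) / (1 - t) > 1 + t`.
Bounding `t` from below by the tangent line of `q ↦ e^{-2aq}` at `q = 1` gives
`q₀ / tanh (a q₀) > q₀ + (1 + 2a) e^{-2a} q₀ - 2a e^{-2a} q₀²`, and `q₀ > 1` finishes. -/

theorem one_add_lt_one_add_div_one_sub {t : ℝ} (h0 : 0 < t) (h1 : t < 1) :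
    1 + t < (1 + t) / (1 - t) := by
  rw [lt_div_iff₀ (by linarith)]
  nlinarith

namespace Real

theorem inv_tanh_eq (x : ℝ) :
    (tanh x)⁻¹ = (1 + exp (-(2 * x))) / (1 - exp (-(2 * x))) := by
  have hsplit : exp (-(2 * x)) = exp (-x) * exp (-x) := by rw [← exp_add]; ring_nf
  have hcancel : exp x * exp (-x) = 1 := by rw [← exp_add, add_neg_cancel, exp_zero]
  rw [tanh_eq, inv_div, hsplit, ← mul_div_mul_left _ _ (exp_pos (-x)).ne']
  congr 1 <;> linear_combination hcancel

theorem exp_mul_one_add_sub_le_exp (c y : ℝ) : exp c * (1 + (y - c)) ≤ exp y := by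
  have hsplit : exp y = exp c * exp (y - c) := by rw [← exp_add, add_sub_cancel]
  rw [hsplit, add_comm 1]
  exact mul_le_mul_of_nonneg_left (add_one_le_exp _) (exp_pos c).le

theorem one_add_exp_neg_two_mul_lt_inv_tanh {x : ℝ} (hx : 0 < x) :
    1 + exp (-(2 * x)) < (tanh x)⁻¹ := by
  rw [inv_tanh_eq]
  exact one_add_lt_one_add_div_one_sub (exp_pos _) (exp_lt_one_iff.mpr (by linarith))

end Real

open Real

theorem q0_div_tanh_gt (a q₀ : ℝ) (ha : 0 < a) (hq : 1 < q₀) :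
    q₀ / Real.tanh (a * q₀) >
      1 + (1 + 2 * a) * Real.exp (-(2 * a)) - 2 * a * Real.exp (-(2 * a)) * q₀ ^ 2 := by
  have hq₀ : 0 < q₀ := by linarith
  have hE : 0 < exp (-(2 * a)) := exp_pos _
  rw [gt_iff_lt, div_eq_mul_inv]
  calc 1 + (1 + 2 * a) * exp (-(2 * a)) - 2 * a * exp (-(2 * a)) * q₀ ^ 2
      < q₀ * (1 + exp (-(2 * a)) * (1 + (-(2 * (a * q₀)) - -(2 * a)))) := by
        nlinarith [mul_pos hE (sub_pos.mpr hq)]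
    _ ≤ q₀ * (1 + exp (-(2 * (a * q₀)))) := by
        gcongr
        exact exp_mul_one_add_sub_le_exp _ _
    _ < q₀ * (tanh (a * q₀))⁻¹ := by
        gcongr
        exact one_add_exp_neg_two_mul_lt_inv_tanh (mul_pos ha hq₀)
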